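/- arXiv:2305.18438 — 2 statements merged into one kernel-verified Lean document; each statement's English description precedes it below -/
import Mathlib

section
/- Let φ₁,…,φₙ ∈ ℝᵈ with ‖φᵢ‖₂ ≤ 1, let y₁,…,yₙ ∈ ℝ with |yᵢ| ≤ H, and λ > 0. Define Λ = Σᵢ φᵢφᵢᵀ and ŵ = (Λ + λI)⁻¹ (Σᵢ φᵢ yᵢ). Then ‖ŵ‖₂ ≤ H·√(n·d/λ). -/
/-!
With `uᵢ = (Λ + λI)⁻¹ φᵢ` we have `ŵ = ∑ yᵢ uᵢ`, so `‖ŵ‖ ≤ H ∑ ‖uᵢ‖ ≤ H √(n ∑ ‖uᵢ‖²)` by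
Cauchy–Schwarz. Since `(Λ + λI) uᵢ = φᵢ` and `Λ ⪰ 0`, `λ ‖uᵢ‖² ≤ ⟪uᵢ, φᵢ⟫`, and summing,
`∑ ⟪uᵢ, φᵢ⟫ = tr ((Λ + λI)⁻¹ Λ) = d - λ tr ((Λ + λI)⁻¹) ≤ d`.
-/

open Matrix Finset

lemma norm_sum_smul_le_mul_sqrt {ι E : Type*} [Fintype ι] [SeminormedAddCommGroup E]
    [NormedSpace ℝ E] {c : ι → ℝ} {u : ι → E} {H S : ℝ} (hc : ∀ i, |c i| ≤ H)
    (hu : ∑ i, ‖u i‖ ^ 2 ≤ S) :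
    ‖∑ i, c i • u i‖ ≤ H * √(Fintype.card ι * S) := by
  cases isEmpty_or_nonempty ι with
  | inl _ => simp
  | inr hι =>
    have hH : 0 ≤ H := (abs_nonneg _).trans (hc hι.some)
    have cauchy_schwarz : ∑ i, ‖u i‖ ≤ √(Fintype.card ι * S) := by
      have hS : 0 ≤ S := (sum_nonneg fun i _ => sq_nonneg ‖u i‖).trans hu
      rw [Real.le_sqrt (by positivity) (by positivity)]
      calc (∑ i, ‖u i‖) ^ 2 ≤ Fintype.card ι * ∑ i, ‖u i‖ ^ 2 := sq_sum_le_card_mul_sum_sq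
        _ ≤ Fintype.card ι * S := by gcongr
    calc ‖∑ i, c i • u i‖ ≤ ∑ i, ‖c i • u i‖ := norm_sum_le _ _
      _ ≤ ∑ i, H * ‖u i‖ := by
        gcongr with i
        rw [norm_smul, Real.norm_eq_abs]
        exact mul_le_mul_of_nonneg_right (hc i) (norm_nonneg _)
      _ = H * ∑ i, ‖u i‖ := (mul_sum _ _ _).symm
      _ ≤ H * √(Fintype.card ι * S) := by gcongr

lemma EuclideanSpace.norm_toLp_sq_eq_dotProduct {m : Type*} [Fintype m] (v : m → ℝ) :
    ‖WithLp.toLp 2 v‖ ^ 2 = v ⬝ᵥ v := by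
  rw [EuclideanSpace.real_norm_sq_eq]
  simp [dotProduct, sq]

namespace Matrix

lemma PosSemidef.posDef_add_smul_one {m : Type*} [DecidableEq m] {Λ : Matrix m m ℝ}
    (hΛ : Λ.PosSemidef) {lam : ℝ} (hlam : 0 < lam) :
    (Λ + lam • 1).PosDef :=
  PosDef.posSemidef_add hΛ (PosDef.one.smul hlam)

variable {m : Type*} [Fintype m] [DecidableEq m] {Λ : Matrix m m ℝ}

lemma PosSemidef.smul_dotProduct_self_le (hΛ : Λ.PosSemidef) (lam : ℝ) (u : m → ℝ) :
    lam * (u ⬝ᵥ u) ≤ u ⬝ᵥ (Λ + lam • 1) *ᵥ u := by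
  have := hΛ.dotProduct_mulVec_nonneg u
  rw [star_trivial] at this
  rw [add_mulVec, smul_mulVec, one_mulVec, dotProduct_add, dotProduct_smul, smul_eq_mul]
  linarith

lemma PosSemidef.trace_inv_add_smul_one_mul_le (hΛ : Λ.PosSemidef) {lam : ℝ} (hlam : 0 < lam) :
    trace ((Λ + lam • 1)⁻¹ * Λ) ≤ Fintype.card m := by
  set A := Λ + lam • (1 : Matrix m m ℝ)
  have hA := hΛ.posDef_add_smul_one hlam
  have hΛA : Λ = A - lam • 1 := (add_sub_cancel_right _ _).symm
  have htrace : trace (A⁻¹ * Λ) = Fintype.card m - lam * trace A⁻¹ := by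
    rw [hΛA, Matrix.mul_sub, nonsing_inv_mul _ ((isUnit_iff_isUnit_det _).mp hA.isUnit),
      Matrix.mul_smul, Matrix.mul_one, trace_sub, trace_one, trace_smul, smul_eq_mul]
  have := hA.inv.posSemidef.trace_nonneg
  rw [htrace]
  nlinarith

end Matrix

lemma mul_sum_dotProduct_self_inv_mulVec_le_card {ι m : Type*} [Fintype ι] [Fintype m]
    [DecidableEq m] (φ : ι → m → ℝ) {lam : ℝ} (hlam : 0 < lam) :
    lam * ∑ i, (∑ j, vecMulVec (φ j) (φ j) + lam • 1)⁻¹ *ᵥ φ i ⬝ᵥ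
      (∑ j, vecMulVec (φ j) (φ j) + lam • 1)⁻¹ *ᵥ φ i ≤ Fintype.card m := by
  set Λ := ∑ j, vecMulVec (φ j) (φ j)
  have hΛ : Λ.PosSemidef := posSemidef_sum _ fun i _ => by
    simpa using posSemidef_vecMulVec_self_star (φ i)
  have hA := hΛ.posDef_add_smul_one hlam
  set A := Λ + lam • (1 : Matrix m m ℝ)
  have hAu (i : ι) : A *ᵥ A⁻¹ *ᵥ φ i = φ i := by
    rw [mulVec_mulVec, mul_nonsing_inv _ ((isUnit_iff_isUnit_det _).mp hA.isUnit), one_mulVec]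
  calc lam * ∑ i, A⁻¹ *ᵥ φ i ⬝ᵥ A⁻¹ *ᵥ φ i
      = ∑ i, lam * (A⁻¹ *ᵥ φ i ⬝ᵥ A⁻¹ *ᵥ φ i) := mul_sum _ _ _
    _ ≤ ∑ i, A⁻¹ *ᵥ φ i ⬝ᵥ φ i := by
      gcongr with i
      have := hΛ.smul_dotProduct_self_le lam (A⁻¹ *ᵥ φ i)
      rwa [hAu] at this
    _ = trace (A⁻¹ * Λ) := by simp [Λ, mul_sum, trace_sum, mul_vecMulVec, trace_vecMulVec]
    _ ≤ Fintype.card m := hΛ.trace_inv_add_smul_one_mul_le hlam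

theorem stmt_8_general {n d : ℕ} (φ : Fin n → (Fin d → ℝ)) (y : Fin n → ℝ) (H lam : ℝ)
    (hy : ∀ i, |y i| ≤ H) (hlam : 0 < lam)
    (Λ : Matrix (Fin d) (Fin d) ℝ) (hΛ : Λ = ∑ i, Matrix.vecMulVec (φ i) (φ i))
    (w : Fin d → ℝ)
    (hw : w = (Λ + lam • (1 : Matrix (Fin d) (Fin d) ℝ))⁻¹.mulVec (∑ i, y i • φ i)) :
    Real.sqrt (∑ j, (w j) ^ 2) ≤ H * Real.sqrt (n * d / lam) := by
  subst hΛ hw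
  set A := (∑ i, vecMulVec (φ i) (φ i)) + lam • (1 : Matrix (Fin d) (Fin d) ℝ)
  have hsum : ∑ i, ‖WithLp.toLp 2 (A⁻¹ *ᵥ φ i)‖ ^ 2 ≤ d / lam := by
    simp_rw [EuclideanSpace.norm_toLp_sq_eq_dotProduct]
    rw [le_div_iff₀' hlam]
    simpa using mul_sum_dotProduct_self_inv_mulVec_le_card φ hlam
  have hŵ : A⁻¹ *ᵥ ∑ i, y i • φ i = WithLp.ofLp (∑ i, y i • WithLp.toLp 2 (A⁻¹ *ᵥ φ i)) := by
    simp [mulVec_sum, mulVec_smul]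
  calc √(∑ j, (A⁻¹ *ᵥ ∑ i, y i • φ i) j ^ 2)
      = ‖∑ i, y i • WithLp.toLp 2 (A⁻¹ *ᵥ φ i)‖ := by
        rw [hŵ, EuclideanSpace.norm_eq]; simp
    _ ≤ H * √(n * (d / lam)) := by
        simpa using norm_sum_smul_le_mul_sqrt hy hsum
    _ = H * √(n * d / lam) := by rw [mul_div_assoc]

theorem stmt_8 {n d : ℕ} (φ : Fin n → (Fin d → ℝ)) (y : Fin n → ℝ) (H lam : ℝ)
    (hφ : ∀ i, Real.sqrt (∑ j, (φ i j) ^ 2) ≤ 1)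
    (hy : ∀ i, |y i| ≤ H) (hlam : 0 < lam)
    (Λ : Matrix (Fin d) (Fin d) ℝ) (hΛ : Λ = ∑ i, Matrix.vecMulVec (φ i) (φ i))
    (w : Fin d → ℝ)
    (hw : w = (Λ + lam • (1 : Matrix (Fin d) (Fin d) ℝ))⁻¹.mulVec (∑ i, y i • φ i)) :
    Real.sqrt (∑ j, (w j) ^ 2) ≤ H * Real.sqrt (n * d / lam) :=
  stmt_8_general φ y H lam hy hlam Λ hΛ w hw
end

section
/- Let Λ ⪰ 0 be a d×d positive semidefinite symmetric matrix, λ > 0, and suppose φ₁,…,φₙ ∈ ℝᵈ and ε₁,…,εₙ ∈ ℝ satisfy Σᵢ εᵢ² ≤ C. Then ‖Σᵢ εᵢφᵢ‖²_{(Λₙ+λI)⁻¹} ≤ C·d, where Λₙ = Σᵢ φᵢφᵢᵀ and ‖v‖²_M = vᵀMv. -/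
/-!
Put v = ∑ εᵢ φᵢ, A = Λ + λI, w = A⁻¹ v and S = vᵀ A⁻¹ v = wᵀ A w. By Cauchy–Schwarz,
S² = (∑ εᵢ φᵢᵀ w)² ≤ (∑ εᵢ²) ∑ (φᵢᵀ w)² = (∑ εᵢ²) wᵀ Λ w ≤ C wᵀ A w = C S, so S ≤ C ≤ C d.
-/

open Matrix

section
variable {ι m : Type*} [Fintype ι] [Fintype m]

lemma dotProduct_sum_vecMulVec_self_mulVec (φ : ι → m → ℝ) (w : m → ℝ) :
    w ⬝ᵥ (∑ i, vecMulVec (φ i) (φ i)) *ᵥ w = ∑ i, (φ i ⬝ᵥ w) ^ 2 := by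
  simp only [sum_mulVec, dotProduct_sum, vecMulVec_mulVec, op_smul_eq_smul, dotProduct_smul,
    smul_eq_mul, dotProduct_comm w (φ _), sq]

lemma posSemidef_sum_vecMulVec_self (φ : ι → m → ℝ) :
    (∑ i, vecMulVec (φ i) (φ i)).PosSemidef :=
  posSemidef_sum _ fun i _ => by simpa using posSemidef_vecMulVec_self_star (φ i)

lemma sq_sum_smul_dotProduct_le (ε : ι → ℝ) (φ : ι → m → ℝ) (w : m → ℝ) :
    ((∑ i, ε i • φ i) ⬝ᵥ w) ^ 2 ≤
      (∑ i, ε i ^ 2) * (w ⬝ᵥ (∑ i, vecMulVec (φ i) (φ i)) *ᵥ w) := by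
  simp only [dotProduct_sum_vecMulVec_self_mulVec, sum_dotProduct, smul_dotProduct, smul_eq_mul]
  exact Finset.sum_mul_sq_le_sq_mul_sq _ _ _

lemma dotProduct_mulVec_le_add_smul_one [DecidableEq m] (A : Matrix m m ℝ) {c : ℝ} (hc : 0 ≤ c)
    (w : m → ℝ) : w ⬝ᵥ A *ᵥ w ≤ w ⬝ᵥ (A + c • 1) *ᵥ w := by
  rw [add_mulVec, dotProduct_add, smul_mulVec, one_mulVec, dotProduct_smul, smul_eq_mul,
    le_add_iff_nonneg_right]
  exact mul_nonneg hc (by simpa using dotProduct_self_star_nonneg w)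

lemma dotProduct_inv_mulVec_le_of_sq_dotProduct_le [DecidableEq m] {A : Matrix m m ℝ}
    (hA : IsUnit A) {v : m → ℝ} {C : ℝ} (hC : 0 ≤ C)
    (h : ∀ w, (v ⬝ᵥ w) ^ 2 ≤ C * (w ⬝ᵥ A *ᵥ w)) : v ⬝ᵥ A⁻¹ *ᵥ v ≤ C := by
  have hquad : A⁻¹ *ᵥ v ⬝ᵥ A *ᵥ (A⁻¹ *ᵥ v) = v ⬝ᵥ A⁻¹ *ᵥ v := by
    rw [mulVec_mulVec, mul_nonsing_inv A ((isUnit_iff_isUnit_det A).mp hA), one_mulVec,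
      dotProduct_comm]
  have hsq := h (A⁻¹ *ᵥ v)
  rw [hquad] at hsq
  nlinarith

end

theorem stmt_18_general {n d : ℕ} (lam C : ℝ) (hlam : 0 < lam)
    (φ : Fin n → (Fin d → ℝ)) (ε : Fin n → ℝ) (hε : ∑ i, (ε i) ^ 2 ≤ C)
    (Λ : Matrix (Fin d) (Fin d) ℝ) (hΛ : Λ = ∑ i, Matrix.vecMulVec (φ i) (φ i)) :
    (∑ i, ε i • φ i) ⬝ᵥ
        ((Λ + lam • (1 : Matrix (Fin d) (Fin d) ℝ))⁻¹).mulVec (∑ i, ε i • φ i) ≤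
      C * d := by
  have hC : 0 ≤ C := (Finset.sum_nonneg fun i _ => sq_nonneg (ε i)).trans hε
  rcases Nat.eq_zero_or_pos d with rfl | hd
  · simp
  have hΛpsd : Λ.PosSemidef := hΛ ▸ posSemidef_sum_vecMulVec_self φ
  have hA : (Λ + lam • 1).PosDef := PosDef.posSemidef_add hΛpsd (PosDef.one.smul hlam)
  have hS := dotProduct_inv_mulVec_le_of_sq_dotProduct_le hA.isUnit hC fun w =>
    calc ((∑ i, ε i • φ i) ⬝ᵥ w) ^ 2 ≤ (∑ i, ε i ^ 2) * (w ⬝ᵥ Λ *ᵥ w) :=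
          hΛ ▸ sq_sum_smul_dotProduct_le ε φ w
      _ ≤ C * (w ⬝ᵥ (Λ + lam • 1) *ᵥ w) :=
          mul_le_mul hε (dotProduct_mulVec_le_add_smul_one Λ hlam.le w)
            (hΛpsd.dotProduct_mulVec_nonneg w) hC
  exact hS.trans (le_mul_of_one_le_right hC (by exact_mod_cast hd))

theorem stmt_18 {n d : ℕ} (lam C : ℝ) (hlam : 0 < lam) (hC : 0 ≤ C)
    (φ : Fin n → (Fin d → ℝ)) (ε : Fin n → ℝ) (hε : ∑ i, (ε i) ^ 2 ≤ C)
    (Λ : Matrix (Fin d) (Fin d) ℝ) (hΛ : Λ = ∑ i, Matrix.vecMulVec (φ i) (φ i)) :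
    (∑ i, ε i • φ i) ⬝ᵥ
        ((Λ + lam • (1 : Matrix (Fin d) (Fin d) ℝ))⁻¹).mulVec (∑ i, ε i • φ i) ≤
      C * d :=
  stmt_18_general lam C hlam φ ε hε Λ hΛ
end
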